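/- Let i ≠ j be elements of I, b ∈ 𝓑(∞), m = m_i(b) and m* = m*_j(b). If i > j, then Γ*^{(j)}_s(f̃_i(b)) = Γ*^{(j)}_s(b) for all 1 ≤ s ≤ j, and Γ^{(i)}_t(f̃*_j(b)) = Γ^{(i)}_t(b) for all 1 ≤ t ≤ n+1−i. If i < j, then for 1 ≤ s ≤ j: Γ*^{(j)}_s(f̃_i(b)) = Γ*^{(j)}_s(b) − 1 if m = j−i and s = m, Γ*^{(j)}_s(f̃_i(b)) = Γ*^{(j)}_s(b) + 1 if m = j−i+1 and s = m, and Γ*^{(j)}_s(f̃_i(b)) = Γ*^{(j)}_s(b) otherwise; and for 1 ≤ t ≤ n+1−i: Γ^{(i)}_t(f̃*_j(b)) = Γ^{(i)}_t(b) − 1 if m* = j−i and t = m*, Γ^{(i)}_t(f̃*_j(b)) = Γ^{(i)}_t(b) + 1 if m* = j−i+1 and t = m*, and Γ^{(i)}_t(f̃*_j(b)) = Γ^{(i)}_t(b) otherwise. -/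

import Mathlib

open Finset

/-- Membership of `(s,t)` in the index set `𝓘 = {(s,t) : 1 ≤ s, 1 ≤ t ≤ n, s+t ≤ n+1}`
for type `Aₙ`. -/
def cellA (n : ℕ) (s t : ℤ) : Prop :=
  1 ≤ s ∧ 1 ≤ t ∧ t ≤ (n : ℤ) ∧ s + t ≤ (n : ℤ) + 1

instance (n : ℕ) (s t : ℤ) : Decidable (cellA n s t) := by
  unfold cellA; infer_instance

/-- The type-`Aₙ` polyhedral realization `𝓑(∞)`: families of nonnegative integers,
vanishing outside `𝓘`, with `b_{s,t} ≥ b_{s+1,t-1}` for `s ≥ 1`, `2 ≤ t ≤ n`. -/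
def BinfA (n : ℕ) : Set (ℤ → ℤ → ℤ) :=
  {b | (∀ s t, 0 ≤ b s t) ∧
       (∀ s t, ¬ cellA n s t → b s t = 0) ∧
       (∀ s t, 1 ≤ s → 2 ≤ t → t ≤ (n : ℤ) → b (s + 1) (t - 1) ≤ b s t)}

/-- The standard basis family `e_{s,t}` (zero if `(s,t) ∉ 𝓘`). -/
def eA (n : ℕ) (s t : ℤ) : ℤ → ℤ → ℤ :=
  fun u v => if u = s ∧ v = t ∧ cellA n s t then 1 else 0

/-- `∂_{s,t}(b) = b_{s,t} − b_{s,t+1} − b_{s+1,t−1} + b_{s+1,t}`. -/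
def dA (b : ℤ → ℤ → ℤ) (s t : ℤ) : ℤ :=
  b s t - b s (t + 1) - b (s + 1) (t - 1) + b (s + 1) t

/-- `∂*_{s,t}(b) = b_{s−1,t} − b_{s−1,t+1} − b_{s,t−1} + b_{s,t}`. -/
def dsA (b : ℤ → ℤ → ℤ) (s t : ℤ) : ℤ :=
  b (s - 1) t - b (s - 1) (t + 1) - b s (t - 1) + b s t

/-- `Γ^{(i)}_k(b) = Σ_{s=k}^{n+1−i} ∂_{s,i}(b)`. -/
noncomputable def GamA (n : ℕ) (b : ℤ → ℤ → ℤ) (i k : ℤ) : ℤ :=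
  ∑ s ∈ Finset.Icc k ((n : ℤ) + 1 - i), dA b s i

/-- `Γ*^{(i)}_k(b) = Σ_{t=1}^{k} ∂*_{t,i+1−t}(b)`. -/
noncomputable def GamSA (b : ℤ → ℤ → ℤ) (i k : ℤ) : ℤ :=
  ∑ t ∈ Finset.Icc (1 : ℤ) k, dsA b t (i + 1 - t)

/-- `ε_i(b) = max_{1≤k≤n+1−i} Γ^{(i)}_k(b)`. -/
noncomputable def epsA (n : ℕ) (b : ℤ → ℤ → ℤ) (i : ℤ) : ℤ :=
  WithBot.unbotD 0 (((Finset.Icc (1 : ℤ) ((n : ℤ) + 1 - i)).image (GamA n b i)).max)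

/-- `ε*_i(b) = max_{1≤k≤i} Γ*^{(i)}_k(b)`. -/
noncomputable def epsSA (b : ℤ → ℤ → ℤ) (i : ℤ) : ℤ :=
  WithBot.unbotD 0 (((Finset.Icc (1 : ℤ) i).image (GamSA b i)).max)

/-- `m_i(b)`: the smallest `k` attaining `ε_i(b)`. -/
noncomputable def mA (n : ℕ) (b : ℤ → ℤ → ℤ) (i : ℤ) : ℤ :=
  WithTop.untopD 0 (((Finset.Icc (1 : ℤ) ((n : ℤ) + 1 - i)).filter
      (fun k => GamA n b i k = epsA n b i)).min)

/-- `m*_i(b)`: the smallest `k` attaining `ε*_i(b)`. -/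
noncomputable def mSA (b : ℤ → ℤ → ℤ) (i : ℤ) : ℤ :=
  WithTop.untopD 0 (((Finset.Icc (1 : ℤ) i).filter (fun k => GamSA b i k = epsSA b i)).min)

/-- `M*_i(b)`: the largest `k` attaining `ε*_i(b)`. -/
noncomputable def MSA (b : ℤ → ℤ → ℤ) (i : ℤ) : ℤ :=
  WithBot.unbotD 0 (((Finset.Icc (1 : ℤ) i).filter (fun k => GamSA b i k = epsSA b i)).max)

/-- `f̃_i(b) = b + e_{m_i(b),i}`. -/
noncomputable def fA (n : ℕ) (b : ℤ → ℤ → ℤ) (i : ℤ) : ℤ → ℤ → ℤ :=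
  fun u v => b u v + eA n (mA n b i) i u v

/-- `f̃*_i(b) = b + Σ_{s=1}^{m*_i(b)} (e_{s,i+1−s} − e_{s−1,i+1−s})`. -/
noncomputable def fSA (n : ℕ) (b : ℤ → ℤ → ℤ) (i : ℤ) : ℤ → ℤ → ℤ :=
  fun u v => b u v +
    ∑ s ∈ Finset.Icc (1 : ℤ) (mSA b i),
      (eA n s (i + 1 - s) u v - eA n (s - 1) (i + 1 - s) u v)

/-- `ẽ*_i(b) = b − Σ_{s=1}^{M*_i(b)} (e_{s,i+1−s} − e_{s−1,i+1−s})`. -/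
noncomputable def eSA (n : ℕ) (b : ℤ → ℤ → ℤ) (i : ℤ) : ℤ → ℤ → ℤ :=
  fun u v => b u v -
    ∑ s ∈ Finset.Icc (1 : ℤ) (MSA b i),
      (eA n s (i + 1 - s) u v - eA n (s - 1) (i + 1 - s) u v)


section Aux

lemma sum_pin (P : ℤ → Prop) [DecidablePred P] (Q : Prop) [Decidable Q]
    (lo M p0 : ℤ) (h : ∀ p, P p ↔ (p = p0 ∧ Q)) :
    (∑ p ∈ Finset.Icc lo M, if P p then (1:ℤ) else 0)
      = if lo ≤ p0 ∧ p0 ≤ M ∧ Q then 1 else 0 := by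
  have h1 : ∀ p ∈ Finset.Icc lo M,
      (if P p then (1:ℤ) else 0) = if p = p0 then (if Q then (1:ℤ) else 0) else 0 := by
    intro p _
    by_cases hp : p = p0
    · subst hp
      by_cases hq : Q <;> simp [h, hq]
    · simp [h, hp]
  rw [Finset.sum_congr rfl h1, Finset.sum_ite_eq']
  simp only [Finset.mem_Icc]
  split_ifs <;> first | rfl | tauto

lemma GamSA_add (b c : ℤ → ℤ → ℤ) (j s : ℤ) :
    GamSA (fun u v => b u v + c u v) j s = GamSA b j s + GamSA c j s := by
  unfold GamSA
  rw [← Finset.sum_add_distrib]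
  exact Finset.sum_congr rfl fun t _ => by simp only [dsA]; ring

lemma GamA_add (n : ℕ) (b c : ℤ → ℤ → ℤ) (i t : ℤ) :
    GamA n (fun u v => b u v + c u v) i t = GamA n b i t + GamA n c i t := by
  unfold GamA
  rw [← Finset.sum_add_distrib]
  exact Finset.sum_congr rfl fun s _ => by simp only [dA]; ring

lemma GamA_sub (n : ℕ) (b c : ℤ → ℤ → ℤ) (i t : ℤ) :
    GamA n (fun u v => b u v - c u v) i t = GamA n b i t - GamA n c i t := by
  unfold GamA
  rw [← Finset.sum_sub_distrib]
  exact Finset.sum_congr rfl fun s _ => by simp only [dA]; ring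

lemma GamA_sum (n : ℕ) (S : Finset ℤ) (F : ℤ → ℤ → ℤ → ℤ) (i t : ℤ) :
    GamA n (fun u v => ∑ p ∈ S, F p u v) i t = ∑ p ∈ S, GamA n (F p) i t := by
  have hd : ∀ s : ℤ, dA (fun u v => ∑ p ∈ S, F p u v) s i = ∑ p ∈ S, dA (F p) s i := by
    intro s
    simp only [dA, ← Finset.sum_sub_distrib, ← Finset.sum_add_distrib]
  unfold GamA
  simp only [hd]
  exact Finset.sum_comm

lemma L1 (n : ℕ) (m i j s : ℤ) (hi1 : 1 ≤ i) (hin : i ≤ (n:ℤ)) (hj1 : 1 ≤ j)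
    (hjn : j ≤ (n:ℤ)) (hs1 : 1 ≤ s) (hsj : s ≤ j) :
    GamSA (eA n m i) j s =
      (if m = j - i ∧ s = m then -1 else if m = j - i + 1 ∧ s = m then 1 else 0) := by
  unfold GamSA dsA eA
  simp only [Finset.sum_add_distrib, Finset.sum_sub_distrib]
  rw [sum_pin (fun t => t - 1 = m ∧ j + 1 - t = i ∧ cellA n m i)
        (j - m = i ∧ cellA n m i) 1 s (m + 1) (fun t => by unfold cellA; omega),
      sum_pin (fun t => t - 1 = m ∧ j + 1 - t + 1 = i ∧ cellA n m i)
        (j + 1 - m = i ∧ cellA n m i) 1 s (m + 1) (fun t => by unfold cellA; omega),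
      sum_pin (fun t => t = m ∧ j + 1 - t - 1 = i ∧ cellA n m i)
        (j - m = i ∧ cellA n m i) 1 s m (fun t => by unfold cellA; omega),
      sum_pin (fun t => t = m ∧ j + 1 - t = i ∧ cellA n m i)
        (j + 1 - m = i ∧ cellA n m i) 1 s m (fun t => by unfold cellA; omega)]
  simp only [cellA]
  split_ifs <;> omega

lemma key2 (n : ℕ) (p q i t : ℤ) :
    GamA n (eA n p q) i t =
      (if t ≤ p ∧ p ≤ (n:ℤ) + 1 - i ∧ (i = q ∧ cellA n p q) then 1 else 0)
    - (if t ≤ p ∧ p ≤ (n:ℤ) + 1 - i ∧ (i + 1 = q ∧ cellA n p q) then 1 else 0)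
    - (if t ≤ p - 1 ∧ p - 1 ≤ (n:ℤ) + 1 - i ∧ (i - 1 = q ∧ cellA n p q) then 1 else 0)
    + (if t ≤ p - 1 ∧ p - 1 ≤ (n:ℤ) + 1 - i ∧ (i = q ∧ cellA n p q) then 1 else 0) := by
  unfold GamA dA eA
  simp only [Finset.sum_add_distrib, Finset.sum_sub_distrib]
  rw [sum_pin (fun s => s = p ∧ i = q ∧ cellA n p q)
        (i = q ∧ cellA n p q) t ((n:ℤ) + 1 - i) p (fun s => Iff.rfl),
      sum_pin (fun s => s = p ∧ i + 1 = q ∧ cellA n p q)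
        (i + 1 = q ∧ cellA n p q) t ((n:ℤ) + 1 - i) p (fun s => Iff.rfl),
      sum_pin (fun s => s + 1 = p ∧ i - 1 = q ∧ cellA n p q)
        (i - 1 = q ∧ cellA n p q) t ((n:ℤ) + 1 - i) (p - 1)
        (fun s => by constructor <;> rintro ⟨h1, h2⟩ <;> exact ⟨by omega, h2⟩),
      sum_pin (fun s => s + 1 = p ∧ i = q ∧ cellA n p q)
        (i = q ∧ cellA n p q) t ((n:ℤ) + 1 - i) (p - 1)
        (fun s => by constructor <;> rintro ⟨h1, h2⟩ <;> exact ⟨by omega, h2⟩)]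

set_option maxHeartbeats 2000000 in
lemma L2 (n : ℕ) (M i j t : ℤ) (hi1 : 1 ≤ i) (hin : i ≤ (n:ℤ)) (hj1 : 1 ≤ j)
    (hjn : j ≤ (n:ℤ)) (ht1 : 1 ≤ t) (htn : t ≤ (n:ℤ) + 1 - i) (hM : M ≤ j) :
    (∑ p ∈ Finset.Icc (1:ℤ) M,
        (GamA n (eA n p (j + 1 - p)) i t - GamA n (eA n (p - 1) (j + 1 - p)) i t)) =
      (if M = j - i ∧ t = M then -1 else if M = j - i + 1 ∧ t = M then 1 else 0) := by
  simp only [key2]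
  simp only [Finset.sum_add_distrib, Finset.sum_sub_distrib]
  rw [sum_pin (fun p => t ≤ p ∧ p ≤ (n:ℤ) + 1 - i ∧ (i = j + 1 - p ∧ cellA n p (j + 1 - p)))
        (t ≤ j + 1 - i ∧ i ≤ j) 1 M (j + 1 - i) (fun p => by unfold cellA; omega),
      sum_pin (fun p => t ≤ p ∧ p ≤ (n:ℤ) + 1 - i ∧ (i + 1 = j + 1 - p ∧ cellA n p (j + 1 - p)))
        (t ≤ j - i ∧ i < j) 1 M (j - i) (fun p => by unfold cellA; omega),
      sum_pin (fun p => t ≤ p - 1 ∧ p - 1 ≤ (n:ℤ) + 1 - i ∧ (i - 1 = j + 1 - p ∧ cellA n p (j + 1 - p)))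
        (t ≤ j + 1 - i ∧ 2 ≤ i ∧ i ≤ j + 1) 1 M (j + 2 - i) (fun p => by unfold cellA; omega),
      sum_pin (fun p => t ≤ p - 1 ∧ p - 1 ≤ (n:ℤ) + 1 - i ∧ (i = j + 1 - p ∧ cellA n p (j + 1 - p)))
        (t ≤ j - i ∧ i ≤ j) 1 M (j + 1 - i) (fun p => by unfold cellA; omega),
      sum_pin (fun p => t ≤ p - 1 ∧ p - 1 ≤ (n:ℤ) + 1 - i ∧ (i = j + 1 - p ∧ cellA n (p - 1) (j + 1 - p)))
        (t ≤ j - i ∧ i < j) 1 M (j + 1 - i) (fun p => by unfold cellA; omega),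
      sum_pin (fun p => t ≤ p - 1 ∧ p - 1 ≤ (n:ℤ) + 1 - i ∧ (i + 1 = j + 1 - p ∧ cellA n (p - 1) (j + 1 - p)))
        (t ≤ j - i - 1 ∧ i + 1 < j) 1 M (j - i) (fun p => by unfold cellA; omega),
      sum_pin (fun p => t ≤ p - 1 - 1 ∧ p - 1 - 1 ≤ (n:ℤ) + 1 - i ∧ (i - 1 = j + 1 - p ∧ cellA n (p - 1) (j + 1 - p)))
        (t ≤ j - i ∧ 2 ≤ i ∧ i ≤ j) 1 M (j + 2 - i) (fun p => by unfold cellA; omega),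
      sum_pin (fun p => t ≤ p - 1 - 1 ∧ p - 1 - 1 ≤ (n:ℤ) + 1 - i ∧ (i = j + 1 - p ∧ cellA n (p - 1) (j + 1 - p)))
        (t ≤ j - i - 1 ∧ i < j) 1 M (j + 1 - i) (fun p => by unfold cellA; omega)]
  split_ifs <;> omega

lemma mSA_le (b : ℤ → ℤ → ℤ) (j : ℤ) (hj : 0 ≤ j) : mSA b j ≤ j := by
  unfold mSA
  rcases hmin : ((Finset.Icc (1 : ℤ) j).filter (fun k => GamSA b j k = epsSA b j)).min
    with _ | x
  · exact hj
  · have hx := Finset.mem_of_min hmin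
    have := (Finset.mem_filter.mp hx).1
    rw [Finset.mem_Icc] at this
    exact this.2

end Aux

/-- effect of `f̃_i` on `Γ*^{(j)}_s` and of `f̃*_j` on `Γ^{(i)}_t`
for distinct `i, j ∈ I`. -/
theorem stmt12 (n : ℕ) (hn : 1 ≤ n) (i j : ℤ)
    (hi1 : 1 ≤ i) (hin : i ≤ (n : ℤ)) (hj1 : 1 ≤ j) (hjn : j ≤ (n : ℤ))
    (hij : i ≠ j) (b : ℤ → ℤ → ℤ) (hb : b ∈ BinfA n) :
    (j < i →
        (∀ s : ℤ, 1 ≤ s → s ≤ j → GamSA (fA n b i) j s = GamSA b j s) ∧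
        (∀ t : ℤ, 1 ≤ t → t ≤ (n : ℤ) + 1 - i →
          GamA n (fSA n b j) i t = GamA n b i t)) ∧
    (i < j →
        (∀ s : ℤ, 1 ≤ s → s ≤ j →
          GamSA (fA n b i) j s =
            GamSA b j s +
              (if mA n b i = j - i ∧ s = mA n b i then -1
               else if mA n b i = j - i + 1 ∧ s = mA n b i then 1 else 0)) ∧
        (∀ t : ℤ, 1 ≤ t → t ≤ (n : ℤ) + 1 - i →
          GamA n (fSA n b j) i t =
            GamA n b i t +
              (if mSA b j = j - i ∧ t = mSA b j then -1
               else if mSA b j = j - i + 1 ∧ t = mSA b j then 1 else 0))) := by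
  have hfa : ∀ s : ℤ, 1 ≤ s → s ≤ j →
      GamSA (fA n b i) j s = GamSA b j s +
        (if mA n b i = j - i ∧ s = mA n b i then -1
         else if mA n b i = j - i + 1 ∧ s = mA n b i then 1 else 0) := by
    intro s hs1 hsj
    have h1 : GamSA (fA n b i) j s
        = GamSA b j s + GamSA (eA n (mA n b i) i) j s :=
      GamSA_add b (eA n (mA n b i) i) j s
    rw [h1, L1 n (mA n b i) i j s hi1 hin hj1 hjn hs1 hsj]
  have hfsa : ∀ t : ℤ, 1 ≤ t → t ≤ (n:ℤ) + 1 - i →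
      GamA n (fSA n b j) i t = GamA n b i t +
        (if mSA b j = j - i ∧ t = mSA b j then -1
         else if mSA b j = j - i + 1 ∧ t = mSA b j then 1 else 0) := by
    intro t ht1 htn
    have h1 : GamA n (fSA n b j) i t
        = GamA n b i t + GamA n (fun u v => ∑ p ∈ Finset.Icc (1:ℤ) (mSA b j),
            (eA n p (j + 1 - p) u v - eA n (p - 1) (j + 1 - p) u v)) i t :=
      GamA_add n b _ i t
    rw [h1, GamA_sum]
    simp only [GamA_sub]
    rw [L2 n (mSA b j) i j t hi1 hin hj1 hjn ht1 htn (mSA_le b j (by omega))]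
  constructor
  · intro hlt
    constructor
    · intro s hs1 hsj
      rw [hfa s hs1 hsj]
      split_ifs <;> omega
    · intro t ht1 htn
      rw [hfsa t ht1 htn]
      split_ifs <;> omega
  · intro hlt
    constructor
    · intro s hs1 hsj
      exact hfa s hs1 hsj
    · intro t ht1 htn
      exact hfsa t ht1 htn
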